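/- For each n ≥ 1, the function C_n(u,v) = uv + (1−cos(2πu))(1−cos(2πnv))/(8π²n) on [0,1]² is a 2-copula, with density c_n(u,v) = 1 + (1/2)sin(2πu)sin(2πnv) ≥ 1/2 > 0. -/
import Mathlib


open Set

/-- A 2-copula on [0,1]². -/
def IsCopula2 (C : ℝ → ℝ → ℝ) : Prop :=
  (∀ u ∈ Set.Icc (0:ℝ) 1, ∀ v ∈ Set.Icc (0:ℝ) 1, C u v ∈ Set.Icc (0:ℝ) 1) ∧
  (∀ u ∈ Set.Icc (0:ℝ) 1, C u 0 = 0 ∧ C 0 u = 0 ∧ C u 1 = u ∧ C 1 u = u) ∧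
  (∀ u ∈ Set.Icc (0:ℝ) 1, ∀ u' ∈ Set.Icc (0:ℝ) 1, ∀ v ∈ Set.Icc (0:ℝ) 1, ∀ v' ∈ Set.Icc (0:ℝ) 1,
    u ≤ u' → v ≤ v' → 0 ≤ C u' v' - C u' v - C u v' + C u v)

/-- The copula C_n(u,v) = uv + (1−cos(2πu))(1−cos(2πnv))/(8π²n). -/
noncomputable def Cn (n : ℕ) (u v : ℝ) : ℝ :=
  u * v + (1 - Real.cos (2 * Real.pi * u)) * (1 - Real.cos (2 * Real.pi * n * v))
    / (8 * Real.pi ^ 2 * n)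

/-- The density c_n(u,v) = 1 + (1/2)sin(2πu)sin(2πnv). -/
noncomputable def cn (n : ℕ) (u v : ℝ) : ℝ :=
  1 + (1/2) * Real.sin (2 * Real.pi * u) * Real.sin (2 * Real.pi * n * v)

lemma abs_cos_sub_cos_le (x y : ℝ) : |Real.cos x - Real.cos y| ≤ |x - y| := by
  rw [Real.cos_sub_cos, abs_mul, abs_mul]
  have h1 : |Real.sin ((x + y) / 2)| ≤ 1 := Real.abs_sin_le_one _
  have h2 : |Real.sin ((x - y) / 2)| ≤ |(x - y) / 2| := Real.abs_sin_le_abs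
  have h3 : |(x - y) / 2| = |x - y| / 2 := by rw [abs_div]; norm_num
  have h4 : |(-2 : ℝ)| = 2 := by norm_num
  rw [h4]
  nlinarith [abs_nonneg (Real.sin ((x - y) / 2)), abs_nonneg (Real.sin ((x + y) / 2)),
    abs_nonneg (x - y)]

lemma int_affine_sin (a b c v : ℝ) (hc : c ≠ 0) :
    ∫ t in (0:ℝ)..v, (a + b * Real.sin (c * t)) = a * v + b * ((1 - Real.cos (c * v)) / c) := by
  have hint : IntervalIntegrable (fun t => b * Real.sin (c * t)) MeasureTheory.volume 0 v := by
    apply Continuous.intervalIntegrable; fun_prop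
  rw [intervalIntegral.integral_add (intervalIntegrable_const) hint,
    intervalIntegral.integral_const_mul,
    intervalIntegral.integral_comp_mul_left Real.sin hc, integral_sin]
  simp only [mul_zero, Real.cos_zero, smul_eq_mul]
  rw [intervalIntegral.integral_const]
  simp only [smul_eq_mul, sub_zero]
  rw [div_eq_mul_inv]
  ring

lemma Cn_eq_integral (n : ℕ) (hn : 1 ≤ n) (u v : ℝ) :
    Cn n u v = ∫ s in (0:ℝ)..u, ∫ t in (0:ℝ)..v, cn n s t := by
  have hπ : (0:ℝ) < Real.pi := Real.pi_pos
  have hnR : (1:ℝ) ≤ (n:ℝ) := by exact_mod_cast hn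
  have hc : (2 * Real.pi * (n:ℝ)) ≠ 0 := by positivity
  have h1 : ∀ s : ℝ, (∫ t in (0:ℝ)..v, cn n s t)
      = v + ((1 - Real.cos (2 * Real.pi * n * v)) / (4 * Real.pi * n)) * Real.sin (2 * Real.pi * s) := by
    intro s
    have h : (∫ t in (0:ℝ)..v, cn n s t)
        = ∫ t in (0:ℝ)..v, (1 + ((1/2) * Real.sin (2 * Real.pi * s)) * Real.sin ((2 * Real.pi * n) * t)) := by
      apply intervalIntegral.integral_congr
      intro t _
      simp only [cn]
    rw [h, int_affine_sin _ _ _ _ hc]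
    field_simp
    ring
  simp only [h1]
  have h2 : (∫ s in (0:ℝ)..u,
      (v + ((1 - Real.cos (2 * Real.pi * n * v)) / (4 * Real.pi * n)) * Real.sin (2 * Real.pi * s)))
      = ∫ s in (0:ℝ)..u,
      (v + ((1 - Real.cos (2 * Real.pi * n * v)) / (4 * Real.pi * n)) * Real.sin ((2 * Real.pi) * s)) := rfl
  rw [h2, int_affine_sin _ _ _ _ (by positivity : (2 * Real.pi) ≠ 0)]
  simp only [Cn]
  field_simp
  ring

/-- For each n ≥ 1, C_n is a 2-copula, with density c_n ≥ 1/2 > 0. -/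
theorem Cn_isCopula2 (n : ℕ) (hn : 1 ≤ n) :
    IsCopula2 (Cn n) ∧
    (∀ u ∈ Icc (0:ℝ) 1, ∀ v ∈ Icc (0:ℝ) 1, (1:ℝ)/2 ≤ cn n u v ∧ 0 < cn n u v) ∧
    (∀ u ∈ Icc (0:ℝ) 1, ∀ v ∈ Icc (0:ℝ) 1,
      Cn n u v = ∫ s in (0:ℝ)..u, ∫ t in (0:ℝ)..v, cn n s t) := by
  have hπ : (0:ℝ) < Real.pi := Real.pi_pos
  have hnR : (1:ℝ) ≤ (n:ℝ) := by exact_mod_cast hn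
  -- boundary values
  have hu0 : ∀ u : ℝ, Cn n u 0 = 0 := by intro u; simp [Cn]
  have h0v : ∀ v : ℝ, Cn n 0 v = 0 := by intro v; simp [Cn]
  have hu1 : ∀ u : ℝ, Cn n u 1 = u := by
    intro u
    have h : (2 * Real.pi * (n:ℝ) * 1) = (n:ℝ) * (2 * Real.pi) := by ring
    simp [Cn, h, Real.cos_nat_mul_two_pi]
  have h1v : ∀ v : ℝ, Cn n 1 v = v := by
    intro v
    have h : (2 * Real.pi * (1:ℝ)) = 2 * Real.pi := by ring
    simp [Cn, h, Real.cos_two_pi]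
  -- 2-increasing for all reals
  have hinc : ∀ u u' v v' : ℝ, u ≤ u' → v ≤ v' →
      0 ≤ Cn n u' v' - Cn n u' v - Cn n u v' + Cn n u v := by
    intro u u' v v' huu hvv
    have hK : (0:ℝ) < 8 * Real.pi ^ 2 * n := by positivity
    have key : Cn n u' v' - Cn n u' v - Cn n u v' + Cn n u v
        = ((8 * Real.pi ^ 2 * n) * ((u' - u) * (v' - v))
          + (Real.cos (2 * Real.pi * u) - Real.cos (2 * Real.pi * u'))
            * (Real.cos (2 * Real.pi * n * v) - Real.cos (2 * Real.pi * n * v')))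
            / (8 * Real.pi ^ 2 * n) := by
      simp only [Cn]; field_simp; ring
    rw [key]
    apply div_nonneg _ hK.le
    set A := Real.cos (2 * Real.pi * u) - Real.cos (2 * Real.pi * u') with hA
    set B := Real.cos (2 * Real.pi * n * v) - Real.cos (2 * Real.pi * n * v') with hB
    have hAle : |A| ≤ 2 * Real.pi * (u' - u) := by
      calc |A| ≤ |2 * Real.pi * u - 2 * Real.pi * u'| := abs_cos_sub_cos_le _ _
        _ = 2 * Real.pi * (u' - u) := by
            rw [show (2 * Real.pi * u - 2 * Real.pi * u') = -(2 * Real.pi * (u' - u)) by ring,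
              abs_neg, abs_of_nonneg (by nlinarith)]
    have hBle : |B| ≤ 2 * Real.pi * n * (v' - v) := by
      calc |B| ≤ |2 * Real.pi * n * v - 2 * Real.pi * n * v'| := abs_cos_sub_cos_le _ _
        _ = 2 * Real.pi * n * (v' - v) := by
            rw [show (2 * Real.pi * (n:ℝ) * v - 2 * Real.pi * n * v') = -(2 * Real.pi * n * (v' - v)) by ring,
              abs_neg, abs_of_nonneg (by nlinarith)]
    have hAB : |A * B| ≤ (2 * Real.pi * (u' - u)) * (2 * Real.pi * n * (v' - v)) := by
      rw [abs_mul]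
      exact mul_le_mul hAle hBle (abs_nonneg _) (by nlinarith)
    have hD : 0 ≤ (u' - u) * (v' - v) :=
      mul_nonneg (sub_nonneg.2 huu) (sub_nonneg.2 hvv)
    have h5 : -(2 * Real.pi * (u' - u) * (2 * Real.pi * n * (v' - v))) ≤ A * B :=
      le_trans (neg_le_neg hAB) (neg_abs_le _)
    have h6 : 0 ≤ Real.pi ^ 2 * n * ((u' - u) * (v' - v)) :=
      mul_nonneg (mul_nonneg (sq_nonneg _) (by linarith)) hD
    nlinarith [h5, h6]
  -- density bounds
  have hcn : ∀ u v : ℝ, (1:ℝ)/2 ≤ cn n u v ∧ 0 < cn n u v := by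
    intro u v
    have h1 := Real.neg_one_le_sin (2 * Real.pi * u)
    have h2 := Real.sin_le_one (2 * Real.pi * u)
    have h3 := Real.neg_one_le_sin (2 * Real.pi * n * v)
    have h4 := Real.sin_le_one (2 * Real.pi * n * v)
    constructor
    · simp only [cn]; nlinarith
    · simp only [cn]; nlinarith
  refine ⟨⟨?_, ?_, ?_⟩, ?_, ?_⟩
  · intro u hu v hv
    constructor
    · have := hinc 0 u 0 v hu.1 hv.1
      simp only [hu0, h0v] at this
      linarith
    · have := hinc 0 u v 1 hu.1 hv.2
      simp only [hu1, h0v] at this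
      linarith [hu.2]
  · intro u _
    exact ⟨hu0 u, h0v u, hu1 u, h1v u⟩
  · intro u _ u' _ v _ v' _ huu hvv
    exact hinc u u' v v' huu hvv
  · intro u _ v _
    exact hcn u v
  · intro u _ v _
    exact Cn_eq_integral n hn u v
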